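/- arXiv:1608.06127 — 6 statements merged into one kernel-verified Lean document; each statement's English description precedes it below -/
import Mathlib

section
/- For every nonempty finite simple graph G, the linear altitude of G equals the chromatic number of G: α(G) = χ(G). -/
/-!
Fix a linear ordering σ and orient every edge towards its σ-larger end. Colouring each vertex by
the number of vertices that follow it on a longest monotone path starting there is proper, so the
longest monotone path has at least χ(G) vertices (Gallai–Roy). Conversely, list the vertices of an
optimal colouring class by class: colours then strictly increase along every monotone path, which
therefore has at most χ(G) vertices.
-/

open SimpleGraph

/-- The linear altitude of `G`: the largest `k` such that every linear ordering of the
vertices of `G` contains a monotonic path with `k` vertices, where a monotonic path is a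
path of `G` whose vertices appear in increasing order in the ordering. -/
noncomputable def linAltitude {V : Type*} [Fintype V] (G : SimpleGraph V) : ℕ :=
  sSup {k | ∀ σ : V ≃ Fin (Fintype.card V), ∃ l : List V,
    l.Chain' G.Adj ∧ (l.map fun x => σ x).Chain' (· < ·) ∧ l.length = k}

theorem List.isChain_and {α : Type*} {R S : α → α → Prop} {l : List α} :
    l.IsChain (fun a b => R a b ∧ S a b) ↔ l.IsChain R ∧ l.IsChain S := by
  simp only [List.isChain_iff_forall_rel_of_append_cons_cons]
  exact ⟨fun h => ⟨fun _ _ _ _ e => (h e).1, fun _ _ _ _ e => (h e).2⟩,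
    fun h _ _ _ _ e => ⟨h.1 e, h.2 e⟩⟩

theorem List.exists_longest {α : Type*} {P : List α → Prop} {N : ℕ}
    (hne : ∃ l, P l) (hbdd : ∀ l, P l → l.length ≤ N) :
    ∃ l, P l ∧ ∀ l', P l' → l'.length ≤ l.length := by
  let S := {n | ∃ l, P l ∧ l.length = n}
  have hS : BddAbove S := by
    refine ⟨N, ?_⟩
    rintro _ ⟨l, hl, rfl⟩
    exact hbdd l hl
  obtain ⟨l₀, hl₀⟩ := hne
  obtain ⟨l, hl, hlen⟩ := Nat.sSup_mem (s := S) ⟨_, l₀, hl₀, rfl⟩ hS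
  exact ⟨l, hl, fun l' hl' => hlen ▸ le_csSup hS ⟨l', hl', rfl⟩⟩

theorem Fintype.exists_equivFin_monotone_comp_symm {V β : Type*} [Fintype V] [LinearOrder β]
    (g : V → β) : ∃ σ : V ≃ Fin (Fintype.card V), Monotone (g ∘ σ.symm) := by
  let e := Fintype.equivFin V
  refine ⟨e.trans (Tuple.sort (g ∘ e.symm)).symm, ?_⟩
  simpa [Function.comp_assoc] using Tuple.monotone_sort (g ∘ e.symm)

namespace SimpleGraph

variable {V : Type*} {G : SimpleGraph V}

theorem colorable_of_isChain_length_le {r : V → V → Prop} {N : ℕ}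
    (horient : ∀ ⦃u v⦄, G.Adj u v → r u v ∨ r v u)
    (hbdd : ∀ l : List V, l.IsChain r → l.length ≤ N) : G.Colorable N := by
  choose tail htail hmax using fun v => List.exists_longest
    (P := fun l => (v :: l).IsChain r) ⟨[], List.isChain_singleton v⟩
    (fun l hl => Nat.le_of_succ_le (hbdd _ hl))
  have hlt : ∀ ⦃u v⦄, r u v → (tail v).length < (tail u).length := fun u v huv =>
    hmax u (v :: tail v) (List.isChain_cons_cons.mpr ⟨huv, htail v⟩)
  refine (G.colorable_iff_exists_bdd_nat_coloring N).mpr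
    ⟨Coloring.mk (fun v => (tail v).length) fun {u v} huv => ?_, fun v => hbdd _ (htail v)⟩
  rcases horient huv with h | h
  · exact (hlt h).ne'
  · exact (hlt h).ne

variable {α : Type*}

variable (G) in
def IsMonotonePath [LT α] (f : V → α) (l : List V) : Prop :=
  l.IsChain G.Adj ∧ (l.map f).IsChain (· < ·)

theorem isMonotonePath_iff [LT α] {f : V → α} {l : List V} :
    G.IsMonotonePath f l ↔ l.IsChain fun u v => G.Adj u v ∧ f u < f v := by
  rw [IsMonotonePath, List.isChain_map, List.isChain_and]

namespace IsMonotonePath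

variable {f : V → α} {l : List V}

theorem take [LT α] (hl : G.IsMonotonePath f l) (n : ℕ) : G.IsMonotonePath f (l.take n) :=
  ⟨hl.1.take n, by simpa only [List.map_take] using hl.2.take n⟩

theorem nodup_map [Preorder α] (hl : G.IsMonotonePath f l) : (l.map f).Nodup :=
  (List.isChain_iff_pairwise.mp hl.2).nodup

theorem nodup [Preorder α] (hl : G.IsMonotonePath f l) : l.Nodup :=
  hl.nodup_map.of_map f

theorem length_le_card {β : Type*} [Fintype β] [PartialOrder β] [LT α] (C : G.Coloring β)
    (hC : ∀ ⦃u v⦄, f u < f v → C u ≤ C v) (hl : G.IsMonotonePath f l) :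
    l.length ≤ Fintype.card β := by
  have hCl : G.IsMonotonePath C l := ⟨hl.1, (List.isChain_map C).mpr <|
    (isMonotonePath_iff.mp hl).imp fun _ _ h => (hC h.2).lt_of_ne (C.valid h.1)⟩
  simpa using hCl.nodup_map.length_le_card

end IsMonotonePath

theorem exists_isMonotonePath_colorable_length [Fintype V] [LinearOrder α] {f : V → α}
    (hf : Function.Injective f) : ∃ l, G.IsMonotonePath f l ∧ G.Colorable l.length := by
  obtain ⟨l, hl, hmax⟩ := List.exists_longest ⟨[], List.isChain_nil⟩ fun l hl =>
    (isMonotonePath_iff (G := G) (f := f)).mpr hl |>.nodup.length_le_card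
  refine ⟨l, isMonotonePath_iff.mpr hl, colorable_of_isChain_length_le (fun u v huv => ?_) hmax⟩
  rcases (hf.ne huv.ne).lt_or_gt with h | h
  · exact .inl ⟨huv, h⟩
  · exact .inr ⟨huv.symm, h⟩

end SimpleGraph

theorem linAltitude_eq_of_forall_exists {V : Type*} [Fintype V] {G : SimpleGraph V} {k : ℕ}
    (hlow : ∀ σ : V ≃ Fin (Fintype.card V), ∃ l, G.IsMonotonePath σ l ∧ k ≤ l.length)
    (hup : ∃ σ : V ≃ Fin (Fintype.card V), ∀ l, G.IsMonotonePath σ l → l.length ≤ k) :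
    linAltitude G = k := by
  obtain ⟨σ₀, hσ₀⟩ := hup
  refine IsGreatest.csSup_eq ⟨fun σ => ?_, fun k' hk' => ?_⟩
  · obtain ⟨l, hl, hk⟩ := hlow σ
    exact ⟨l.take k, (hl.take k).1, (hl.take k).2, by simp [hk]⟩
  · obtain ⟨l, hadj, hmono, rfl⟩ := hk' σ₀
    exact hσ₀ l ⟨hadj, hmono⟩

theorem linAltitude_eq_chromaticNumber_general {V : Type*} [Fintype V]
    (G : SimpleGraph V) :
    (linAltitude G : ℕ∞) = G.chromaticNumber := by
  obtain ⟨c, hc⟩ := ENat.ne_top_iff_exists.mp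
    (chromaticNumber_ne_top_iff_exists.mpr ⟨_, G.colorable_of_fintype⟩)
  obtain ⟨C⟩ : G.Colorable c := by simpa [← hc] using G.colorable_chromaticNumber_of_fintype
  obtain ⟨σ₀, hσ₀⟩ := Fintype.exists_equivFin_monotone_comp_symm C
  rw [← hc, Nat.cast_inj]
  refine linAltitude_eq_of_forall_exists (fun σ => ?_) ⟨σ₀, fun l hl => ?_⟩
  · obtain ⟨l, hl, hcol⟩ := exists_isMonotonePath_colorable_length σ.injective
    exact ⟨l, hl, by exact_mod_cast hc ▸ hcol.chromaticNumber_le⟩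
  · simpa using hl.length_le_card C fun u v h => by simpa using hσ₀ h.le

/-- For every nonempty finite simple graph `G`, the linear altitude of `G` equals the
chromatic number of `G`. -/
theorem linAltitude_eq_chromaticNumber {V : Type*} [Fintype V] [Nonempty V]
    (G : SimpleGraph V) :
    (linAltitude G : ℕ∞) = G.chromaticNumber :=
  linAltitude_eq_chromaticNumber_general G
end

section
/- For every finite simple graph G with at least one edge, α∘(G) ≤ χ(G): if V(G) is partitioned into s stable (independent) sets, then every circular ordering of V(G) that places the vertices of each stable set consecutively (first all vertices of the first set, then all vertices of the second set, and so on) has no monotonic cycle with more than s vertices; in particular the circular altitude is at most the chromatic number. -/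
open SimpleGraph

/-- A list of vertices forms a cycle of `G` (single edges count as cycles of length 2):
at least two vertices, no repetitions, and consecutive vertices (cyclically) adjacent. -/
def IsCycleList {V : Type*} (G : SimpleGraph V) (l : List V) : Prop :=
  2 ≤ l.length ∧ l.Nodup ∧
    ∀ i : Fin l.length,
      G.Adj (l.get i) (l.get ⟨((i : ℕ) + 1) % l.length, Nat.mod_lt _ i.pos⟩)

/-- A cycle of `G` is monotonic for a circular ordering `σ` of the vertices if, after a
suitable rotation, its vertices appear in increasing order of position, i.e. the vertices
`u_1, …, u_k, u_1` of the cycle appear in this cyclic order in `σ`. -/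
def IsMonotonicCycle {V : Type*} [Fintype V] (G : SimpleGraph V)
    (σ : V ≃ Fin (Fintype.card V)) (l : List V) : Prop :=
  IsCycleList G l ∧ ∃ r : ℕ, ((l.rotate r).map fun x => (σ x : ℕ)).Chain' (· < ·)

/-- The circular altitude of `G`: the largest `k` such that every circular ordering of
the vertices of `G` contains a monotonic cycle with at least `k` vertices. -/
noncomputable def circAltitude {V : Type*} [Fintype V] (G : SimpleGraph V) : ℕ :=
  sSup {k | ∀ σ : V ≃ Fin (Fintype.card V), ∃ l : List V,
    IsMonotonicCycle G σ l ∧ k ≤ l.length}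

/-!
Order the vertices colour class by colour class. Along a monotonic cycle (read from the
right rotation) consecutive vertices are adjacent, hence differently coloured, and their
positions increase, so their colours strictly increase: the cycle meets each colour class
at most once. Taking a colouring with `χ(G)` colours gives an ordering without monotonic
cycles longer than `χ(G)`.
-/

theorem IsCycleList.isChain_rotate {V : Type*} {G : SimpleGraph V} {l : List V}
    (h : IsCycleList G l) (r : ℕ) : (l.rotate r).IsChain G.Adj := by
  refine List.isChain_iff_getElem.mpr fun i hi => ?_
  have hi' : i + 1 < l.length := by simpa using hi
  have hpos : 0 < l.length := by omega
  have hsucc : ((i + r) % l.length + 1) % l.length = (i + 1 + r) % l.length := by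
    rw [Nat.mod_add_mod, Nat.add_right_comm]
  simpa [List.getElem_rotate, hsucc] using h.2.2 ⟨(i + r) % l.length, Nat.mod_lt _ hpos⟩

theorem List.IsChain.map_lt_of_map_lt {V α β : Type*} [LinearOrder α] [Preorder β]
    {G : SimpleGraph V} {P : V → α} {σ : V → β} {l : List V}
    (hP : ∀ a b, G.Adj a b → P a ≠ P b) (hσ : ∀ a b, P a < P b → σ a < σ b)
    (hl : l.IsChain G.Adj) (hmono : (l.map σ).IsChain (· < ·)) :
    (l.map P).IsChain (· < ·) := by
  rw [List.isChain_map, List.isChain_iff_getElem] at *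
  intro i hi
  exact (hP _ _ (hl i hi)).lt_or_gt.resolve_right fun hgt => (hσ _ _ hgt).asymm (hmono i hi)

theorem IsMonotonicCycle.length_le_card {V α : Type*} [Fintype V] [LinearOrder α] [Fintype α]
    {G : SimpleGraph V} {P : V → α} {σ : V ≃ Fin (Fintype.card V)} {l : List V}
    (hP : ∀ a b, G.Adj a b → P a ≠ P b) (hσ : ∀ a b, P a < P b → σ a < σ b)
    (hl : IsMonotonicCycle G σ l) : l.length ≤ Fintype.card α := by
  obtain ⟨hcycle, r, hmono⟩ := hl
  have hchain : ((l.rotate r).map P).IsChain (· < ·) :=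
    (hcycle.isChain_rotate r).map_lt_of_map_lt (σ := fun x => (σ x : ℕ)) hP hσ hmono
  simpa using (List.isChain_iff_pairwise.mp hchain).nodup.length_le_card

theorem exists_equiv_fin_lt_of_lt {V α : Type*} [Fintype V] [LinearOrder α] (f : V → α) :
    ∃ σ : V ≃ Fin (Fintype.card V), ∀ a b, f a < f b → σ a < σ b := by
  let e := Fintype.equivFin V
  let key : V → Lex (α × Fin (Fintype.card V)) := fun v => toLex (f v, e v)
  have hkey : Function.Injective key := fun a b h =>
    e.injective (congrArg (fun x => (ofLex x).2) h)
  let _ : LinearOrder V := LinearOrder.lift' key hkey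
  exact ⟨(monoEquivOfFin V rfl).symm.toEquiv, fun a b h =>
    (monoEquivOfFin V rfl).symm.lt_iff_lt.mpr (Prod.Lex.left _ _ h)⟩

theorem circAltitude_le_of_forall_length_le {V : Type*} [Fintype V] {G : SimpleGraph V}
    {k : ℕ} (σ : V ≃ Fin (Fintype.card V))
    (h : ∀ l, IsMonotonicCycle G σ l → l.length ≤ k) : circAltitude G ≤ k :=
  csSup_le' fun _ hk => let ⟨l, hl, hkl⟩ := hk σ; hkl.trans (h l hl)

theorem circAltitude_le_chromaticNumber_general {V : Type*} [Fintype V]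
    (G : SimpleGraph V) :
    (∀ (s : ℕ) (P : V → Fin s), (∀ a b : V, G.Adj a b → P a ≠ P b) →
      ∀ σ : V ≃ Fin (Fintype.card V), (∀ a b : V, P a < P b → σ a < σ b) →
        ∀ l : List V, IsMonotonicCycle G σ l → l.length ≤ s) ∧
    (circAltitude G : ℕ∞) ≤ G.chromaticNumber := by
  have hcolouring : ∀ (s : ℕ) (P : V → Fin s), (∀ a b : V, G.Adj a b → P a ≠ P b) →
      ∀ σ : V ≃ Fin (Fintype.card V), (∀ a b : V, P a < P b → σ a < σ b) →
        ∀ l : List V, IsMonotonicCycle G σ l → l.length ≤ s := fun s P hP σ hσ l hl => by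
    simpa using hl.length_le_card hP hσ
  refine ⟨hcolouring, le_chromaticNumber_iff_coloring.mpr fun m C => ?_⟩
  obtain ⟨σ, hσ⟩ := exists_equiv_fin_lt_of_lt C
  exact_mod_cast circAltitude_le_of_forall_length_le σ
    (hcolouring m C (fun _ _ hab => C.valid hab) σ hσ)

/-- For every finite simple graph `G` with at least one edge, `α∘(G) ≤ χ(G)`:
if `V(G)` is partitioned into `s` stable sets (i.e. properly coloured by `s` colours),
then every circular ordering of `V(G)` placing the vertices of each stable set
consecutively (first all vertices of the first set, then all vertices of the second set,
and so on) has no monotonic cycle with more than `s` vertices; in particular, the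
circular altitude is at most the chromatic number. -/
theorem circAltitude_le_chromaticNumber {V : Type*} [Fintype V]
    (G : SimpleGraph V) (hedge : ∃ a b : V, G.Adj a b) :
    (∀ (s : ℕ) (P : V → Fin s), (∀ a b : V, G.Adj a b → P a ≠ P b) →
      ∀ σ : V ≃ Fin (Fintype.card V), (∀ a b : V, P a < P b → σ a < σ b) →
        ∀ l : List V, IsMonotonicCycle G σ l → l.length ≤ s) ∧
    (circAltitude G : ℕ∞) ≤ G.chromaticNumber :=
  circAltitude_le_chromaticNumber_general G
end

section
/- If G is a finite simple graph with α∘(G) > 2, then α∘(G) ≥ girth(G), the length of a shortest cycle of G. -/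
open SimpleGraph

/-! A monotonic cycle with at least three vertices is a genuine cycle of `G`, so it has at least
`girth G` vertices. Since `α∘(G) > 2`, every circular ordering has such a cycle with at least
`α∘(G)` vertices, so the girth is one of the values `k` of which `α∘(G)` is the supremum. -/

namespace IsCycleList

variable {V : Type*} {G : SimpleGraph V} {l : List V}

lemma isChain (hl : IsCycleList G l) : l.IsChain G.Adj := by
  rw [List.isChain_iff_getElem]
  intro i hi
  simpa [Nat.mod_eq_of_lt hi] using hl.2.2 ⟨i, by omega⟩

lemma adj_getLast_head (hl : IsCycleList G l) (hne : l ≠ []) :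
    G.Adj (l.getLast hne) (l.head hne) := by
  have hpos : 0 < l.length := List.length_pos_iff.mpr hne
  simpa [List.getLast_eq_getElem, List.head_eq_getElem, Nat.sub_add_cancel hpos]
    using hl.2.2 ⟨l.length - 1, by omega⟩

lemma exists_isCycle (hl : IsCycleList G l) (h3 : 3 ≤ l.length) :
    ∃ (u : V) (c : G.Walk u u), c.IsCycle ∧ c.length = l.length := by
  have hne : l ≠ [] := List.ne_nil_of_length_pos (by omega)
  let p := Walk.ofSupport l hne hl.isChain
  have hlen : (p.cons (hl.adj_getLast_head hne)).length = l.length := by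
    rw [Walk.length_cons, Walk.length_ofSupport]; omega
  refine ⟨_, p.cons (hl.adj_getLast_head hne), ?_, hlen⟩
  refine Walk.isCycle_iff_isPath_tail_and_le_length.mpr ⟨.mk' ?_, hlen ▸ h3⟩
  rw [Walk.support_tail_of_not_nil _ Walk.not_nil_cons]
  simpa [p] using hl.2.1

lemma girth_le_length (hl : IsCycleList G l) (h3 : 3 ≤ l.length) : G.girth ≤ l.length := by
  obtain ⟨_, c, hc, hlen⟩ := hl.exists_isCycle h3
  exact hlen ▸ SimpleGraph.girth_le_length hc

lemma not_isAcyclic (hl : IsCycleList G l) (h3 : 3 ≤ l.length) : ¬ G.IsAcyclic := by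
  obtain ⟨_, c, hc, -⟩ := hl.exists_isCycle h3
  exact fun hG => hG c hc

end IsCycleList

section circAltitude

variable {V : Type*} [Fintype V] {G : SimpleGraph V}

lemma bddAbove_monotonicCycle_lengths : BddAbove {k | ∀ σ : V ≃ Fin (Fintype.card V),
    ∃ l : List V, IsMonotonicCycle G σ l ∧ k ≤ l.length} := by
  refine ⟨Fintype.card V, fun k hk => ?_⟩
  obtain ⟨l, hl, hkl⟩ := hk (Fintype.equivFin V)
  exact hkl.trans hl.1.2.1.length_le_card

lemma le_circAltitude {k : ℕ}
    (hk : ∀ σ : V ≃ Fin (Fintype.card V), ∃ l : List V, IsMonotonicCycle G σ l ∧ k ≤ l.length) :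
    k ≤ circAltitude G :=
  le_csSup bddAbove_monotonicCycle_lengths hk

lemma exists_isMonotonicCycle_circAltitude_le_length (hG : 0 < circAltitude G)
    (σ : V ≃ Fin (Fintype.card V)) :
    ∃ l : List V, IsMonotonicCycle G σ l ∧ circAltitude G ≤ l.length := by
  have hne : {k | ∀ σ : V ≃ Fin (Fintype.card V),
      ∃ l : List V, IsMonotonicCycle G σ l ∧ k ≤ l.length}.Nonempty :=
    Set.nonempty_iff_ne_empty.mpr fun h => by simp [circAltitude, h] at hG
  exact Nat.sSup_mem hne bddAbove_monotonicCycle_lengths σ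

end circAltitude

/-- If `G` is a finite simple graph with `α∘(G) > 2`, then `α∘(G) ≥ girth(G)`,
the length of a shortest cycle of `G`. -/
theorem girth_le_circAltitude {V : Type*} [Fintype V]
    (G : SimpleGraph V) (h : 2 < circAltitude G) :
    G.egirth ≤ (circAltitude G : ℕ∞) := by
  obtain ⟨l, hl, hkl⟩ :=
    exists_isMonotonicCycle_circAltitude_le_length (G := G) (by omega) (Fintype.equivFin V)
  rw [← ENat.natCast_toNat (egirth_eq_top.not.mpr (hl.1.not_isAcyclic (by omega)))]
  refine ENat.natCast_le_natCast.mpr (le_circAltitude fun σ => ?_)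
  obtain ⟨l, hl, hkl⟩ := exists_isMonotonicCycle_circAltitude_le_length (G := G) (by omega) σ
  exact ⟨l, hl, hl.1.girth_le_length (by omega)⟩
end

section
/- Suppose G is a finite simple graph with at least one edge, r ≥ 0, χ(M^r(G)) = t where t is odd, and the length of the shortest odd cycle of G is strictly greater than t (in particular this holds if G has no odd cycle). Then α∘(M^r(G)) < t. -/
open SimpleGraph

/-- The Mycielskian `M(G)` of a graph `G`: the vertex set is
`{w} ∪ {aᵘ : a ∈ V(G)} ∪ {aᵛ : a ∈ V(G)}`, encoded with `w = none`,
`aᵘ = some (Sum.inl a)` and `aᵛ = some (Sum.inr a)`.  The vertices `aᵛ` induce a copy of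
`G`, the vertex `w` is adjacent to every `aᵘ`, and for every edge `ab` of `G` the edges
`aᵘbᵛ` and `bᵘaᵛ` are present; there are no other edges. -/
def mycielskian {V : Type u} (G : SimpleGraph V) : SimpleGraph (Option (V ⊕ V)) where
  Adj x y :=
    match x, y with
    | none, some (Sum.inl _) => True
    | some (Sum.inl _), none => True
    | some (Sum.inr a), some (Sum.inr b) => G.Adj a b
    | some (Sum.inl a), some (Sum.inr b) => G.Adj a b
    | some (Sum.inr a), some (Sum.inl b) => G.Adj a b
    | _, _ => False
  symm := by
    constructor
    rintro (_ | (a | a)) (_ | (b | b)) h <;> first | trivial | exact h.symm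
  loopless := by
    constructor
    rintro (_ | (a | a)) h <;> first | trivial | exact G.loopless.irrefl a h

/-- The vertex set of the `r`-fold iterated Mycielskian `M^r(G)` of a graph on `V`. -/
def IterMycVert (V : Type u) : ℕ → Type u
  | 0 => V
  | r + 1 => Option (IterMycVert V r ⊕ IterMycVert V r)

instance iterMycVertFintype (V : Type u) [Fintype V] : ∀ r : ℕ, Fintype (IterMycVert V r)
  | 0 => inferInstanceAs (Fintype V)
  | r + 1 =>
    have := iterMycVertFintype V r
    inferInstanceAs (Fintype (Option (IterMycVert V r ⊕ IterMycVert V r)))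

instance iterMycVertDecEq (V : Type u) [DecidableEq V] :
    ∀ r : ℕ, DecidableEq (IterMycVert V r)
  | 0 => inferInstanceAs (DecidableEq V)
  | r + 1 =>
    have := iterMycVertDecEq V r
    inferInstanceAs (DecidableEq (Option (IterMycVert V r ⊕ IterMycVert V r)))

/-- The `r`-fold iterated Mycielskian `M^r(G)`, with `M^0(G) = G`. -/
def iterMycielskian {V : Type u} (G : SimpleGraph V) :
    ∀ r : ℕ, SimpleGraph (IterMycVert V r)
  | 0 => G
  | r + 1 => mycielskian (iterMycielskian G r)

/-- Words of length `r` in the letters `u, v` are encoded as functions `Fin r → Bool`,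
with `u = true` and `v = false`.  Words are read from right to left: index `0` is the
rightmost letter (the superscript applied first) and index `r - 1` is the leftmost
letter (the superscript applied last); thus index `s` corresponds to position `s + 1`
of the word, reading right to left. -/
abbrev MycWord (r : ℕ) := Fin r → Bool

/-- The vertex `i^W` of `M^r(G)`: the vertex `i ∈ V(G)` decorated by the word `W`
of length `r` in the letters `u, v` (applied right to left). -/
def wordVert {V : Type u} : ∀ {r : ℕ}, MycWord r → V → IterMycVert V r
  | 0, _, a => a
  | r + 1, W, a =>
    if W (Fin.last r) = true then
      some (Sum.inl (wordVert (fun k => W k.castSucc) a))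
    else
      some (Sum.inr (wordVert (fun k => W k.castSucc) a))

/-- The vertex `w_j^U` of `M^r(G)` (for `1 ≤ j ≤ r`): the apex vertex `w_j` introduced at
the `j`-th Mycielski step, decorated by the word `U` of length `r - j` in the letters
`u, v` (applied right to left). -/
def wVert {V : Type u} : ∀ {r : ℕ} (j : ℕ), 1 ≤ j → j ≤ r → MycWord (r - j) →
    IterMycVert V r
  | 0, _, h1, h2, _ => absurd (h1.trans h2) (by omega)
  | r + 1, j, h1, h2, U =>
    if hj : j = r + 1 then none
    else
      have hjr : j ≤ r := by omega
      have hlt : r - j < r + 1 - j := by omega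
      if U ⟨r - j, hlt⟩ = true then
        some (Sum.inl (wVert j h1 hjr (fun k => U ⟨(k : ℕ), by have := k.isLt; omega⟩)))
      else
        some (Sum.inr (wVert j h1 hjr (fun k => U ⟨(k : ℕ), by have := k.isLt; omega⟩)))

/-- The lexicographic order on words of length `r` in `u, v`, reading from right to left
(index `0` first) with `v < u` (i.e. `false < true`). -/
def wordLT {r : ℕ} (W₁ W₂ : MycWord r) : Prop :=
  ∃ k : Fin r, W₁ k = false ∧ W₂ k = true ∧ ∀ m : Fin r, m < k → W₁ m = W₂ m


/-!
Let `s = t - r`. Removing the Mycielski steps one at a time, each costing at most one colour,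
shows that `G` is `s`-colourable. Order the vertices of `M^r(G)` by their word in `u, v`, read as
a binary number with `u = 1` and the first letter most significant, breaking ties between
vertices `iᵂ` by the colour of `i`. Adjacent vertices never carry `u` in the same position, so
along an increasing run of adjacent vertices the leading `u` disappears one position per step:
all but the last `r` vertices of a monotonic cycle carry no `u`, and there the colours strictly
increase. Hence a monotonic cycle has at most `s + r = t` vertices. An apex is lighter than every
vertex `iᵂ` adjacent to it, so a monotonic cycle with `t` vertices consists of vertices `iᵂ`
only, and it projects to a closed walk of odd length `t` in `G`, which contains an odd cycle of
length at most `t`.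
-/

namespace SimpleGraph

variable {V : Type*} {G : SimpleGraph V}

theorem exists_walk_length_eq_of_adj_succ (y : ℕ → V) :
    ∀ n, (∀ i < n, G.Adj (y i) (y (i + 1))) → ∃ p : G.Walk (y 0) (y n), p.length = n
  | 0, _ => ⟨.nil, rfl⟩
  | n + 1, h =>
    let ⟨p, hp⟩ := exists_walk_length_eq_of_adj_succ y n fun i hi => h i (by omega)
    ⟨p.concat (h n n.lt_succ_self), by simp [hp]⟩

theorem Walk.exists_isCycle_odd_length_le {u : V} (p : G.Walk u u) (hp : Odd p.length) :
    ∃ (v : V) (c : G.Walk v v), c.IsCycle ∧ Odd c.length ∧ c.length ≤ p.length := by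
  induction hn : p.length using Nat.strong_induction_on generalizing u with
  | _ n ih =>
  cases p with
  | nil => simp at hp
  | @cons _ v _ h q =>
    by_cases hq : q.IsPath
    · refine ⟨u, .cons h q, ?_, hn ▸ hp, hn.le⟩
      have hq0 : q.length ≠ 0 := fun h0 => h.ne (q.eq_of_length_eq_zero h0).symm
      have hq1 : q.length ≠ 1 := by rintro h1; simp [h1, Nat.odd_iff] at hp
      refine isCycle_iff_isPath_tail_and_le_length.2 ⟨?_, by simp; omega⟩
      simpa using hq
    · -- a vertex repeated along `q` splits off a nontrivial closed subwalk
      obtain ⟨x, w, ⟨ru, rv, rfl⟩, hw⟩ :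
          ∃ (x : V) (w : G.Walk x x), w.IsSubwalk q ∧ ¬w.Nil := by
        simpa [Walk.isPath_iff_isSubwalk_imp_nil] using hq
      have hw0 : 0 < w.length := Walk.not_nil_iff_lt_length.1 hw
      set p' := Walk.cons h (ru.append rv)
      have hp'0 : 0 < p'.length := by simp [p']
      have hlen : p'.length + w.length = n := by simp [p', ← hn]; omega
      have hodd : Odd p'.length ∨ Odd w.length := by
        rw [hn, ← hlen, Nat.odd_add] at hp
        exact (Nat.even_or_odd w.length).imp hp.2 id
      rcases hodd with hodd | hodd
      · obtain ⟨v', c, hc, hco, hle⟩ := ih _ (by omega) p' hodd rfl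
        exact ⟨v', c, hc, hco, by omega⟩
      · obtain ⟨v', c, hc, hco, hle⟩ := ih _ (by omega) w hodd rfl
        exact ⟨v', c, hc, hco, by omega⟩

theorem Colorable.of_mycielskian {n : ℕ} (h : (mycielskian G).Colorable n) :
    G.Colorable (n - 1) := by
  obtain ⟨C⟩ := h
  have hu : ∀ a, C (some (.inl a)) ≠ C none :=
    fun a => C.valid (show (mycielskian G).Adj _ none from trivial)
  -- recolour `aᵛ` with the colour of `aᵘ` where it clashes with the apex
  let f : V → {c // c ≠ C none} := fun a =>
    if hv : C (some (.inr a)) = C none then ⟨_, hu a⟩ else ⟨_, hv⟩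
  have hf : ∀ {a b}, G.Adj a b → f a ≠ f b := by
    intro a b hab hfab
    have hvv : C (some (.inr a)) ≠ C (some (.inr b)) :=
      C.valid (show (mycielskian G).Adj _ _ from hab)
    have huv : C (some (.inl a)) ≠ C (some (.inr b)) :=
      C.valid (show (mycielskian G).Adj _ _ from hab)
    have hvu : C (some (.inr a)) ≠ C (some (.inl b)) :=
      C.valid (show (mycielskian G).Adj _ _ from hab)
    simp only [f] at hfab
    split_ifs at hfab with ha hb hb <;> simp only [Subtype.mk.injEq] at hfab
    · exact hvv (ha.trans hb.symm)
    · exact huv hfab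
    · exact hvu hfab
    · exact hvv hfab
  simpa [Fintype.card_subtype_compl] using (Coloring.mk f hf).colorable

theorem Colorable.of_iterMycielskian : ∀ {r n : ℕ},
    (iterMycielskian G r).Colorable n → G.Colorable (n - r)
  | 0, _, h => h
  | r + 1, n, h => by
    simpa [Nat.sub_sub, Nat.add_comm 1] using
      Colorable.of_iterMycielskian (r := r) h.of_mycielskian

end SimpleGraph

theorem Fintype.exists_equivFin_monotone {α β : Type*} [Fintype α] [LinearOrder β] (f : α → β) :
    ∃ σ : α ≃ Fin (Fintype.card α), Monotone (f ∘ σ.symm) :=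
  let e := Fintype.equivFin α
  ⟨e.trans (Tuple.sort (f ∘ e.symm)).symm, Tuple.monotone_sort (f ∘ e.symm)⟩

theorem circAltitude_le {V : Type*} [Fintype V] {G : SimpleGraph V} {m : ℕ}
    (σ : V ≃ Fin (Fintype.card V)) (h : ∀ l, IsMonotonicCycle G σ l → l.length ≤ m) :
    circAltitude G ≤ m :=
  csSup_le' fun _ hk => let ⟨l, hl, hkl⟩ := hk σ; hkl.trans (h l hl)

theorem IsMonotonicCycle.exists_adj_succ {V β : Type*} [Fintype V] [Preorder β]
    {G : SimpleGraph V} {σ : V ≃ Fin (Fintype.card V)} {f : V → β}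
    (hσ : Monotone (f ∘ σ.symm)) {l : List V} (hl : IsMonotonicCycle G σ l) :
    ∃ x : ℕ → V, (∀ i, G.Adj (x i) (x (i + 1))) ∧ x l.length = x 0 ∧
      ∀ i, i + 1 < l.length → f (x i) ≤ f (x (i + 1)) := by
  obtain ⟨⟨hlen, -, hadj⟩, n, hchain⟩ := hl
  have hL : 0 < l.length := by omega
  refine ⟨fun i => l[(i + n) % l.length]'(Nat.mod_lt _ hL), fun i => ?_, ?_, fun i hi => ?_⟩
  · have := hadj ⟨(i + n) % l.length, Nat.mod_lt _ hL⟩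
    simp only [List.get_eq_getElem, Nat.mod_add_mod] at this
    simpa [Nat.add_right_comm] using this
  · simp
  · have := List.isChain_iff_getElem.1 hchain i (by simpa using hi)
    simp only [List.getElem_map, List.getElem_rotate] at this
    simpa [Nat.add_right_comm] using hσ (Fin.le_def.2 this.le)

namespace IterMycVert

variable {V : Type*} {G : SimpleGraph V}

/-- The word of a vertex as a binary number with `u = 1`, the letter of the last Mycielski step
being the least significant bit; the apex `w_j^U` has weight that of `U`. -/
def weight : ∀ {ρ : ℕ}, IterMycVert V ρ → ℕ
  | 0, _ => 0
  | _ + 1, none => 0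
  | _ + 1, some (Sum.inl x) => 2 * weight x + 1
  | _ + 1, some (Sum.inr x) => 2 * weight x

/-- `some i` for the vertex `iᵂ`, `none` for the apexes. -/
def base : ∀ {ρ : ℕ}, IterMycVert V ρ → Option V
  | 0, a => some a
  | _ + 1, none => none
  | _ + 1, some (Sum.inl x) => base x
  | _ + 1, some (Sum.inr x) => base x

theorem weight_lt_two_pow : ∀ {ρ : ℕ} (x : IterMycVert V ρ), x.weight < 2 ^ ρ
  | 0, _ => by simp [weight]
  | _ + 1, none => by simp [weight]
  | _ + 1, some (Sum.inl x) => by have := weight_lt_two_pow x; rw [weight, pow_succ]; omega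
  | _ + 1, some (Sum.inr x) => by have := weight_lt_two_pow x; rw [weight, pow_succ]; omega

theorem testBit_weight_eq_false_of_adj : ∀ {ρ : ℕ} {x y : IterMycVert V ρ} {e : ℕ},
    (iterMycielskian G ρ).Adj x y → x.weight.testBit e → y.weight.testBit e = false
  | 0, _, _, _, _, hx => by simp [weight] at hx
  | _ + 1, x, y, e, h, hx => by
    -- the edges of `M(H)` join `w` to `aᵘ`, or `aᵘ` or `aᵛ` to `bᵛ`, never `aᵘ` to `bᵘ`
    rcases x with _ | (a | a) <;> rcases y with _ | (b | b) <;> cases e <;>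
      simp_all [weight, iterMycielskian, mycielskian, Nat.testBit_succ, Nat.mul_add_div] <;>
      exact testBit_weight_eq_false_of_adj h hx

theorem base_ne_none_of_adj_of_weight_eq_zero : ∀ {ρ : ℕ} {x y : IterMycVert V ρ},
    (iterMycielskian G ρ).Adj x y → x.weight = 0 → y.weight = 0 → x.base ≠ none
  | 0, _, _, _, _, _ => by simp [base]
  | _ + 1, x, y, h, hx, hy => by
    rcases x with _ | (a | a) <;> rcases y with _ | (b | b) <;>
      simp_all [weight, base, iterMycielskian, mycielskian]
    exact base_ne_none_of_adj_of_weight_eq_zero h hx hy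

theorem weight_lt_of_adj_of_base_eq_none : ∀ {ρ : ℕ} {x y : IterMycVert V ρ},
    (iterMycielskian G ρ).Adj x y → x.base = none → y.base ≠ none → x.weight < y.weight
  | 0, _, _, _, hx, _ => by simp [base] at hx
  | _ + 1, x, y, h, hx, hy => by
    rcases x with _ | (a | a) <;> rcases y with _ | (b | b) <;>
      simp_all [weight, base, iterMycielskian, mycielskian] <;>
      (have := weight_lt_of_adj_of_base_eq_none h hx hy; omega)

theorem adj_of_base_eq_some : ∀ {ρ : ℕ} {x y : IterMycVert V ρ} {a b : V},
    (iterMycielskian G ρ).Adj x y → x.base = some a → y.base = some b → G.Adj a b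
  | 0, _, _, _, _, h, hx, hy => by cases hx; cases hy; exact h
  | _ + 1, x, y, _, _, h, hx, hy => by
    rcases x with _ | (a | a) <;> rcases y with _ | (b | b) <;>
      simp_all [base, iterMycielskian, mycielskian] <;>
      exact adj_of_base_eq_some h hx hy

section Chain

variable {r L : ℕ} {x : ℕ → IterMycVert V r}

theorem weight_lt_two_pow_sub_of_chain
    (hadj : ∀ i, (iterMycielskian G r).Adj (x i) (x (i + 1)))
    (hmono : ∀ i, i + 1 < L → (x i).weight ≤ (x (i + 1)).weight) :
    ∀ k i, i + k < L → (x i).weight < 2 ^ (r - k)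
  | 0, i, _ => weight_lt_two_pow (x i)
  | k + 1, i, hi => by
    have h₀ := weight_lt_two_pow_sub_of_chain hadj hmono k i (by omega)
    have h₁ := weight_lt_two_pow_sub_of_chain hadj hmono k (i + 1) (by omega)
    by_cases hrk : r ≤ k
    · rwa [show r - (k + 1) = r - k by omega]
    obtain ⟨e, he⟩ : ∃ e, r - k = e + 1 := ⟨r - (k + 1), by omega⟩
    rw [he] at h₀ h₁
    rw [show r - (k + 1) = e by omega]
    by_contra! hge
    -- `x i` and the heavier `x (i + 1)` would both carry a `u` in position `e`
    have hbit₀ := Nat.testBit_of_two_pow_le_and_two_pow_add_one_gt hge h₀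
    have hbit₁ := Nat.testBit_of_two_pow_le_and_two_pow_add_one_gt
      (hge.trans (hmono i (by omega))) h₁
    simp [testBit_weight_eq_false_of_adj (hadj i) hbit₀] at hbit₁

theorem weight_eq_zero_of_chain (hadj : ∀ i, (iterMycielskian G r).Adj (x i) (x (i + 1)))
    (hmono : ∀ i, i + 1 < L → (x i).weight ≤ (x (i + 1)).weight) {i : ℕ} (hi : i + r < L) :
    (x i).weight = 0 := by
  simpa using weight_lt_two_pow_sub_of_chain hadj hmono r i hi

theorem base_ne_none_of_chain (hadj : ∀ i, (iterMycielskian G r).Adj (x i) (x (i + 1)))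
    (hmono : ∀ i, i + 1 < L → (x i).weight ≤ (x (i + 1)).weight) (hL : r + 2 ≤ L) :
    ∀ i < L, (x i).base ≠ none
  | 0, _ => base_ne_none_of_adj_of_weight_eq_zero (hadj 0)
      (weight_eq_zero_of_chain hadj hmono (by omega)) (weight_eq_zero_of_chain hadj hmono (by omega))
  | i + 1, hi => fun hnone => (hmono i hi).not_gt <| weight_lt_of_adj_of_base_eq_none
      (hadj i).symm hnone (base_ne_none_of_chain hadj hmono hL i (by omega))

theorem length_le_of_chain {s : ℕ} (C : G.Coloring (Fin s))
    (hadj : ∀ i, (iterMycielskian G r).Adj (x i) (x (i + 1)))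
    (hmono : ∀ i, i + 1 < L → (x i).weight ≤ (x (i + 1)).weight)
    (htie : ∀ i, i + 1 < L → (x i).weight = (x (i + 1)).weight →
      ∀ a b, (x i).base = some a → (x (i + 1)).base = some b → C a ≤ C b)
    (hL : r + 2 ≤ L) : L ≤ s + r := by
  have hword := base_ne_none_of_chain hadj hmono hL
  have hcolor : ∀ i, i + r < L → ∀ a, (x i).base = some a → i ≤ C a := by
    intro i
    induction i with
    | zero => simp
    | succ i ih =>
      intro hi a ha
      obtain ⟨b, hb⟩ := Option.ne_none_iff_exists'.1 (hword i (by omega))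
      have hle := htie i (by omega) (by rw [weight_eq_zero_of_chain hadj hmono (by omega),
        weight_eq_zero_of_chain hadj hmono hi]) b a hb ha
      have hlt : C b < C a := hle.lt_of_ne (C.valid (adj_of_base_eq_some (hadj i) hb ha))
      have := ih (by omega) b hb
      rw [Fin.lt_def] at hlt
      omega
  obtain ⟨a, ha⟩ := Option.ne_none_iff_exists'.1 (hword (L - r - 1) (by omega))
  have := hcolor (L - r - 1) (by omega) a ha
  have := (C a).isLt
  omega

theorem exists_walk_of_chain (hadj : ∀ i, (iterMycielskian G r).Adj (x i) (x (i + 1)))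
    (hmono : ∀ i, i + 1 < L → (x i).weight ≤ (x (i + 1)).weight) (hL : r + 2 ≤ L)
    (hclose : x L = x 0) : ∃ (a : V) (p : G.Walk a a), p.length = L := by
  have hword := base_ne_none_of_chain hadj hmono hL
  obtain ⟨a₀, -⟩ := Option.ne_none_iff_exists'.1 (hword 0 (by omega))
  let y i := ((x i).base).getD a₀
  have hy : ∀ i ≤ L, (x i).base = some (y i) := by
    intro i hi
    have hi' : (x i).base ≠ none := by
      rcases hi.lt_or_eq with hi | rfl
      · exact hword i hi
      · exact hclose ▸ hword 0 (by omega)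
    obtain ⟨b, hb⟩ := Option.ne_none_iff_exists'.1 hi'
    simp [y, hb]
  obtain ⟨p, hp⟩ := SimpleGraph.exists_walk_length_eq_of_adj_succ y L
    fun i hi => adj_of_base_eq_some (hadj i) (hy i hi.le) (hy (i + 1) hi)
  exact ⟨y 0, p.copy rfl (by simp [y, hclose]), by simpa using hp⟩

end Chain

variable [Fintype V] {r s : ℕ}

/-- The second component `⊥` given to the apexes is arbitrary. -/
def orderKey (C : G.Coloring (Fin s)) (x : IterMycVert V r) : ℕ ×ₗ WithBot (Fin s) :=
  toLex (x.weight, x.base.map C)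

theorem length_le_of_isMonotonicCycle (hs : 0 < s) (C : G.Coloring (Fin s))
    {σ : IterMycVert V r ≃ Fin (Fintype.card (IterMycVert V r))}
    (hσ : Monotone (orderKey C ∘ σ.symm)) {l : List (IterMycVert V r)}
    (hl : IsMonotonicCycle (iterMycielskian G r) σ l) : l.length ≤ s + r := by
  obtain ⟨x, hadj, -, hkey⟩ := hl.exists_adj_succ hσ
  have hkey' i hi := Prod.Lex.toLex_le_toLex'.1 (hkey i hi)
  by_contra! hlt
  have := length_le_of_chain C hadj (fun i hi => (hkey' i hi).1)
    (fun i hi heq a b ha hb => by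
      have := (hkey' i hi).2 heq
      simp only [ha, hb, Option.map_some] at this
      exact WithBot.coe_le_coe.1 this) (by omega)
  omega

theorem exists_walk_of_isMonotonicCycle
    {σ : IterMycVert V r ≃ Fin (Fintype.card (IterMycVert V r))}
    (hσ : Monotone (weight ∘ σ.symm)) {l : List (IterMycVert V r)}
    (hl : IsMonotonicCycle (iterMycielskian G r) σ l) (hL : r + 2 ≤ l.length) :
    ∃ (a : V) (p : G.Walk a a), p.length = l.length :=
  let ⟨_, hadj, hclose, hmono⟩ := hl.exists_adj_succ hσ
  exists_walk_of_chain hadj hmono hL hclose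

end IterMycVert

/-- Suppose `G` is a finite simple graph with at least one edge, `r ≥ 0`,
`χ(M^r(G)) = t` where `t` is odd, and the length of the shortest odd cycle of `G` is
strictly greater than `t` (every odd cycle of `G` has length `> t`).  Then
`α∘(M^r(G)) < t`. -/
theorem circAltitude_iterMycielskian_lt {V : Type*} [Fintype V] (G : SimpleGraph V)
    (hedge : ∃ a b : V, G.Adj a b) (r t : ℕ)
    (ht : (iterMycielskian G r).chromaticNumber = (t : ℕ∞)) (htodd : Odd t)
    (hoddgirth : ∀ (a : V) (w : G.Walk a a), w.IsCycle → Odd w.length → t < w.length) :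
    circAltitude (iterMycielskian G r) < t := by
  obtain ⟨a, b, hab⟩ := hedge
  have hG : G.Colorable (t - r) :=
    (chromaticNumber_le_iff_colorable.1 ht.le).of_iterMycielskian
  have hs : 2 ≤ t - r := by
    exact_mod_cast (two_le_chromaticNumber_of_adj hab).trans hG.chromaticNumber_le
  obtain ⟨C⟩ := hG
  obtain ⟨σ, hσ⟩ := Fintype.exists_equivFin_monotone (IterMycVert.orderKey (r := r) C)
  have hlen : ∀ l, IsMonotonicCycle (iterMycielskian G r) σ l → l.length ≤ t - 1 := by
    intro l hl
    have hle := IterMycVert.length_le_of_isMonotonicCycle (by omega) C hσ hl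
    refine Nat.le_sub_one_of_lt (lt_of_le_of_ne (by omega) fun heq => ?_)
    obtain ⟨_, p, hp⟩ := IterMycVert.exists_walk_of_isMonotonicCycle
      (Prod.Lex.monotone_fst_ofLex.comp hσ) hl (by omega)
    obtain ⟨_, c, hc, hodd, hcp⟩ := p.exists_isCycle_odd_length_le (by rwa [hp, heq])
    exact (hoddgirth _ c hc hodd).not_ge (hcp.trans (hp.trans heq).le)
  have := circAltitude_le σ hlen
  have := htodd.pos
  omega
end

section
/- For every finite simple graph G with at least one edge, α∘(G) ≤ χ_c(G); equivalently, since α∘(G) is an integer, α∘(G) ≤ ⌊χ_c(G)⌋. Concretely: if G admits a (p,q)-colouring for positive integers p, q, then α∘(G) ≤ p/q. -/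
/-!
Given a `(p,q)`-colouring `c`, order the vertices circularly by increasing colour. Along a
monotonic cycle `u₁, …, u_k` the colours are then nondecreasing, so each of the `k - 1`
forward edges raises the colour by at least `q`, while the closing edge `u_k u₁` can lower it
by at most `p - q`. Hence `k q ≤ p`. Colouring the vertices injectively by `{1, …, n}` inside
`{1, …, n + 1}` shows that the set whose infimum is `χ_c(G)` is nonempty.
-/

open SimpleGraph

/-- A `(p,q)`-colouring of `G`: a map `c : V(G) → {1, …, p}` (encoded as `Fin p`) such
that `q ≤ |c u − c v| ≤ p − q` for every edge `uv` of `G`. -/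
def IsPQColoring {V : Type*} (G : SimpleGraph V) (p q : ℕ) (c : V → Fin p) : Prop :=
  ∀ a b : V, G.Adj a b →
    (q : ℤ) ≤ |((c a : ℕ) : ℤ) - ((c b : ℕ) : ℤ)| ∧
      |((c a : ℕ) : ℤ) - ((c b : ℕ) : ℤ)| ≤ (p : ℤ) - (q : ℤ)

/-- The circular chromatic number `χ_c(G)`: the infimum of `p / q` over all pairs of
positive integers `(p, q)` for which `G` admits a `(p,q)`-colouring. -/
noncomputable def circChromNum {V : Type*} [Fintype V] (G : SimpleGraph V) : ℝ :=
  sInf {x : ℝ | ∃ p q : ℕ, 0 < p ∧ 0 < q ∧ x = (p : ℝ) / (q : ℝ) ∧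
    ∃ c : V → Fin p, IsPQColoring G p q c}

section ChainArithmetic

variable {α M : Type*} [AddCommMonoid M] [PartialOrder M] [IsOrderedAddMonoid M]

theorem List.IsChain.add_length_nsmul_le_getLast {f : α → M} {d : M} {a : α} {l : List α}
    (h : (a :: l).IsChain fun x y => f x + d ≤ f y) :
    f a + l.length • d ≤ f ((a :: l).getLast (List.cons_ne_nil a l)) := by
  induction l generalizing a with
  | nil => simp
  | cons b l ih =>
    rw [List.isChain_cons_cons] at h
    calc f a + (b :: l).length • d = f a + d + l.length • d := by
          rw [List.length_cons, succ_nsmul', add_assoc]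
      _ ≤ f b + l.length • d := by gcongr; exact h.1
      _ ≤ _ := ih h.2

end ChainArithmetic

theorem Fintype.exists_equiv_fin_monotone {V α : Type*} [Fintype V] [LinearOrder α]
    (f : V → α) : ∃ σ : V ≃ Fin (Fintype.card V), Monotone (f ∘ σ.symm) := by
  let e := Fintype.equivFin V
  exact ⟨e.trans (Tuple.sort (f ∘ e.symm)).symm, Tuple.monotone_sort (f ∘ e.symm)⟩

section Graph

variable {V : Type*} {G : SimpleGraph V}

theorem IsCycleList.cycleChain {l : List V} (h : IsCycleList G l) :
    Cycle.Chain G.Adj (l : Cycle V) := by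
  obtain ⟨-, -, hadj⟩ := h
  cases l with
  | nil => exact Cycle.Chain.nil _
  | cons a t =>
    rw [Cycle.chain_coe_cons, List.isChain_iff_getElem]
    intro i hi
    have := hadj ⟨i, by simp at hi ⊢; omega⟩
    simp only [List.get_eq_getElem, List.length_cons] at this hi
    have hnext : (a :: (t ++ [a]))[i + 1] =
        (a :: t)[(i + 1) % (t.length + 1)]'(Nat.mod_lt _ t.length.succ_pos) := by
      rcases Nat.lt_or_ge (i + 1) (t.length + 1) with hlt | hge
      · simp only [Nat.mod_eq_of_lt hlt]
        grind
      · simp only [show i + 1 = t.length + 1 by grind, Nat.mod_self]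
        grind
    rw [hnext]
    grind

namespace IsPQColoring

variable {p q : ℕ} {c : V → Fin p}

theorem add_le_of_adj_of_le (hc : IsPQColoring G p q c) {x y : V} (hxy : G.Adj x y)
    (hle : c x ≤ c y) : ((c x : ℕ) : ℤ) + q ≤ ((c y : ℕ) : ℤ) := by
  have hle' : ((c x : ℕ) : ℤ) ≤ (c y : ℕ) := by exact_mod_cast hle
  have h := (hc x y hxy).1
  rw [abs_sub_comm, abs_of_nonneg (sub_nonneg.2 hle')] at h
  omega

theorem sub_le_of_adj (hc : IsPQColoring G p q c) {x y : V} (hxy : G.Adj x y) :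
    ((c x : ℕ) : ℤ) - ((c y : ℕ) : ℤ) ≤ p - q :=
  (le_abs_self _).trans (hc x y hxy).2

theorem length_mul_le_of_cycleChain {β : Type*} [Preorder β] (hc : IsPQColoring G p q c)
    {s : V → β} (hs : ∀ ⦃x y⦄, s x < s y → c x ≤ c y) {m : List V}
    (hm : Cycle.Chain G.Adj (m : Cycle V)) (hms : m.IsChain fun x y => s x < s y) :
    m.length * q ≤ p := by
  cases m with
  | nil => simp
  | cons a t =>
    rw [Cycle.chain_coe_cons, ← List.cons_append, List.isChain_append] at hm
    obtain ⟨hadj, -, hwrap⟩ := hm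
    have hclose :=
      hc.sub_le_of_adj (hwrap _ (List.getLast?_eq_some_getLast (List.cons_ne_nil a t)) a rfl)
    have hboth : (a :: t).IsChain fun x y => G.Adj x y ∧ s x < s y :=
      List.isChain_iff_getElem.2 fun i hi => ⟨hadj.getElem i hi, hms.getElem i hi⟩
    have hrise : (a :: t).IsChain fun x y => ((c x : ℕ) : ℤ) + q ≤ ((c y : ℕ) : ℤ) :=
      hboth.imp fun x y hxy => hc.add_le_of_adj_of_le hxy.1 (hs hxy.2)
    have htel := hrise.add_length_nsmul_le_getLast
    simp only [nsmul_eq_mul] at htel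
    zify
    simp only [List.length_cons]
    push_cast
    linarith

theorem length_mul_le_of_isMonotonicCycle [Fintype V] (hc : IsPQColoring G p q c)
    {σ : V ≃ Fin (Fintype.card V)} (hσ : Monotone (c ∘ σ.symm)) {l : List V}
    (hl : IsMonotonicCycle G σ l) : l.length * q ≤ p := by
  obtain ⟨hcyc, r, hchain⟩ := hl
  have hrot : ((l.rotate r : List V) : Cycle V) = l := Cycle.coe_eq_coe.2 (.forall l r)
  rw [← List.length_rotate l r]
  refine hc.length_mul_le_of_cycleChain (s := fun x => (σ x : ℕ)) (fun x y hxy => ?_)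
    (hrot ▸ hcyc.cycleChain) (List.isChain_map _ |>.1 hchain)
  simpa using hσ (Fin.le_iff_val_le_val.2 hxy.le)

theorem circAltitude_le_div [Fintype V] (hc : IsPQColoring G p q c) (hq : 0 < q) :
    circAltitude G ≤ p / q := by
  obtain ⟨σ, hσ⟩ := Fintype.exists_equiv_fin_monotone c
  refine csSup_le' fun k hk => ?_
  obtain ⟨l, hl, hkl⟩ := hk σ
  exact (Nat.le_div_iff_mul_le hq).2 <|
    (Nat.mul_le_mul_right q hkl).trans (hc.length_mul_le_of_isMonotonicCycle hσ hl)

end IsPQColoring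

theorem isPQColoring_castSucc_of_injective {n : ℕ} {f : V → Fin n} (hf : Function.Injective f) :
    IsPQColoring G (n + 1) 1 fun v => (f v).castSucc := by
  intro x y hxy
  have hne : ((f x : ℕ) : ℤ) ≠ (f y : ℕ) := by
    exact_mod_cast Fin.val_injective.ne (hf.ne hxy.ne)
  have hx := (f x).2
  have hy := (f y).2
  simp only [Fin.val_castSucc, Nat.cast_add, Nat.cast_one, add_sub_cancel_right]
  exact ⟨Int.one_le_abs (sub_ne_zero.2 hne), abs_sub_le_iff.2 ⟨by omega, by omega⟩⟩

end Graph

theorem circAltitude_le_circChromNum_general {V : Type*} [Fintype V]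
    (G : SimpleGraph V) :
    (circAltitude G : ℝ) ≤ circChromNum G ∧
      ∀ p q : ℕ, 0 < p → 0 < q → ∀ c : V → Fin p, IsPQColoring G p q c →
        (circAltitude G : ℝ) ≤ (p : ℝ) / (q : ℝ) := by
  have hdiv : ∀ p q : ℕ, 0 < p → 0 < q → ∀ c : V → Fin p, IsPQColoring G p q c →
      (circAltitude G : ℝ) ≤ (p : ℝ) / (q : ℝ) := fun p q _ hq c hc =>
    (Nat.cast_le.2 (hc.circAltitude_le_div hq)).trans Nat.cast_div_le
  refine ⟨le_csInf ?_ ?_, hdiv⟩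
  · exact ⟨_, Fintype.card V + 1, 1, Nat.succ_pos _, one_pos, rfl, _,
      isPQColoring_castSucc_of_injective (Fintype.equivFin V).injective⟩
  · rintro x ⟨p, q, hp, hq, rfl, c, hc⟩
    exact hdiv p q hp hq c hc

/-- For every finite simple graph `G` with at least one edge, `α∘(G) ≤ χ_c(G)`.
Concretely: if `G` admits a `(p,q)`-colouring for positive integers `p, q`, then
`α∘(G) ≤ p / q`. -/
theorem circAltitude_le_circChromNum {V : Type*} [Fintype V]
    (G : SimpleGraph V) (hedge : ∃ a b : V, G.Adj a b) :
    (circAltitude G : ℝ) ≤ circChromNum G ∧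
      ∀ p q : ℕ, 0 < p → 0 < q → ∀ c : V → Fin p, IsPQColoring G p q c →
        (circAltitude G : ℝ) ≤ (p : ℝ) / (q : ℝ) :=
  circAltitude_le_circChromNum_general G
end

section
/- Let G be a finite simple graph, r ≥ 1, and fix a powerful ordering of M^r(G) with respect to a proper χ(G)-colouring c of G. Let i, j ∈ V(G) with i adjacent to j in G, and suppose i^{W1} is adjacent to j^{W2} in M^r(G) for words W1, W2 of length r in u, v, where j^{W2} comes after i^{W1} in the powerful ordering. If W1 has the letter u in position s (reading right to left) with s > 1, then there is an integer k with 1 ≤ k < s such that W1 has the letter v in position k and W2 has the letter u in position k. -/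
open SimpleGraph

/-- A powerful ordering of `M^r(G)` with respect to a proper colouring `c` of `G` by the
colours `{1, …, d}` (encoded as `Fin d`):  a linear ordering of the vertices of `M^r(G)`
(encoded as a bijection `σ` with `Fin (card (IterMycVert V r))`, `x` preceding `y` iff
`σ x < σ y`) such that
(P1) for `i, j ∈ V(G)` and a fixed word `W` of length `r`, if `i^W` precedes `j^W` then
`c i ≤ c j`;
(P2) for words `W₁ < W₂` of length `r` in the lexicographic order (right to left,
`v < u`) and any `i, j ∈ V(G)`, `i^{W₁}` precedes `j^{W₂}`;
(P3) every vertex of the form `w_k^U` (`U` of length `r - k`) precedes every vertex of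
the form `j^W` with `j ∈ V(G)` and `W` of length `r`;
(P4) for `k < l`, every vertex of the form `w_k^U` precedes every vertex of the form
`w_l^{U'}`. -/
structure IsPowerfulOrdering {V : Type u} [Fintype V] (G : SimpleGraph V) (r : ℕ)
    (d : ℕ) (c : V → Fin d)
    (σ : IterMycVert V r ≃ Fin (Fintype.card (IterMycVert V r))) : Prop where
  p1 : ∀ (W : MycWord r) (i j : V),
    σ (wordVert W i) < σ (wordVert W j) → c i ≤ c j
  p2 : ∀ W₁ W₂ : MycWord r, wordLT W₁ W₂ → ∀ i j : V,
    σ (wordVert W₁ i) < σ (wordVert W₂ j)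
  p3 : ∀ (k : ℕ) (hk1 : 1 ≤ k) (hk2 : k ≤ r) (U : MycWord (r - k)) (j : V)
    (W : MycWord r), σ (wVert k hk1 hk2 U) < σ (wordVert W j)
  p4 : ∀ (k l : ℕ) (hk1 : 1 ≤ k) (hk2 : k ≤ r) (hl1 : 1 ≤ l) (hl2 : l ≤ r), k < l →
    ∀ (U : MycWord (r - k)) (U' : MycWord (r - l)),
      σ (wVert k hk1 hk2 U) < σ (wVert l hl1 hl2 U')

/-- A monotonic path for a linear ordering `σ` of the vertices of `H`: a path of `H`
whose vertices appear in increasing order in the ordering.  The length of a path is its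
number of vertices. -/
def IsMonoPath {A : Type u} [Fintype A] (H : SimpleGraph A)
    (σ : A ≃ Fin (Fintype.card A)) (l : List A) : Prop :=
  l.Chain' H.Adj ∧ (l.map fun x => σ x).Chain' (· < ·)

/-! Adjacency of `i^{W₁}` and `j^{W₂}` in `M^r(G)` means `i ~ j` in `G` and that `W₁`, `W₂`
never carry `u` in the same position; in particular `W₂` has `v` at `s`.  By (P2) the later
vertex cannot carry the lexicographically smaller word, so `W₁ < W₂`: at their first
difference `W₁` has `v` and `W₂` has `u`, and this position precedes `s`, where they differ. -/

theorem wordVert_succ {V : Type*} {r : ℕ} (W : MycWord (r + 1)) (a : V) :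
    wordVert W a = if W (Fin.last r) = true then
      some (Sum.inl (wordVert (fun k => W k.castSucc) a))
    else some (Sum.inr (wordVert (fun k => W k.castSucc) a)) := rfl

theorem iterMycielskian_adj_wordVert_iff {V : Type*} (G : SimpleGraph V) {r : ℕ}
    (W₁ W₂ : MycWord r) (i j : V) :
    (iterMycielskian G r).Adj (wordVert W₁ i) (wordVert W₂ j) ↔
      G.Adj i j ∧ ∀ t, ¬(W₁ t = true ∧ W₂ t = true) := by
  induction r with
  | zero => simp [iterMycielskian, wordVert]
  | succ r ih =>
    rw [Fin.forall_fin_succ', ← and_assoc, ← ih, wordVert_succ, wordVert_succ]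
    cases W₁ (Fin.last r) <;> cases W₂ (Fin.last r) <;> simp [iterMycielskian, mycielskian]

theorem wordLT_iff_toLex_lt {r : ℕ} {W₁ W₂ : MycWord r} :
    wordLT W₁ W₂ ↔ toLex W₁ < toLex W₂ :=
  exists_congr fun k => by
    change _ ↔ (∀ m < k, W₁ m = W₂ m) ∧ W₁ k < W₂ k
    rw [Bool.lt_iff]
    tauto

theorem wordLT_of_not_wordLT_of_ne {r : ℕ} {W₁ W₂ : MycWord r} (h : ¬wordLT W₂ W₁)
    (hne : W₁ ≠ W₂) : wordLT W₁ W₂ := by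
  rw [wordLT_iff_toLex_lt] at h ⊢
  exact lt_of_le_of_ne (not_lt.1 h) hne

theorem exists_v_u_position_general {V : Type*} [Fintype V] (G : SimpleGraph V)
    (r : ℕ) (d : ℕ)
    (c : V → Fin d)
    (σ : IterMycVert V r ≃ Fin (Fintype.card (IterMycVert V r)))
    (hσ : IsPowerfulOrdering G r d c σ)
    (i j : V) (W₁ W₂ : MycWord r)
    (hadj : (iterMycielskian G r).Adj (wordVert W₁ i) (wordVert W₂ j))
    (horder : σ (wordVert W₁ i) < σ (wordVert W₂ j))
    (s : Fin r) (hu : W₁ s = true) :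
    ∃ k : Fin r, k < s ∧ W₁ k = false ∧ W₂ k = true := by
  have hW₂s : W₂ s = false := by
    simpa [hu] using ((iterMycielskian_adj_wordVert_iff G W₁ W₂ i j).1 hadj).2 s
  have hlt : wordLT W₁ W₂ :=
    wordLT_of_not_wordLT_of_ne (fun h => (hσ.p2 W₂ W₁ h j i).asymm horder)
      fun h => by simp [h, hW₂s] at hu
  obtain ⟨k, hk₁, hk₂, hagree⟩ := hlt
  refine ⟨k, lt_of_le_of_ne (not_lt.1 fun hsk => ?_) ?_, hk₁, hk₂⟩
  · simpa [hu, hW₂s] using hagree s hsk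
  · rintro rfl
    simp [hu] at hk₁

/-- Fix a powerful ordering `σ` of `M^r(G)` with respect to a proper `χ(G)`-colouring `c`
of `G`.  Let `i, j ∈ V(G)` with `i` adjacent to `j` in `G`, and suppose `i^{W₁}` is
adjacent to `j^{W₂}` in `M^r(G)` for words `W₁, W₂` of length `r` in `u, v`, where
`j^{W₂}` comes after `i^{W₁}` in the ordering.  If `W₁` has the letter `u` in a position
`s` (reading right to left, 0-indexed) with `s > 1` (i.e. index `s ≥ 1`), then there is a
position `k < s` such that `W₁` has the letter `v` in position `k` and `W₂` has the
letter `u` in position `k`. -/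
theorem exists_v_u_position {V : Type*} [Fintype V] (G : SimpleGraph V)
    (r : ℕ) (hr : 1 ≤ r) (d : ℕ) (hd : G.chromaticNumber = (d : ℕ∞))
    (c : V → Fin d) (hc : ∀ a b : V, G.Adj a b → c a ≠ c b)
    (σ : IterMycVert V r ≃ Fin (Fintype.card (IterMycVert V r)))
    (hσ : IsPowerfulOrdering G r d c σ)
    (i j : V) (hij : G.Adj i j) (W₁ W₂ : MycWord r)
    (hadj : (iterMycielskian G r).Adj (wordVert W₁ i) (wordVert W₂ j))
    (horder : σ (wordVert W₁ i) < σ (wordVert W₂ j))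
    (s : Fin r) (hs : 1 ≤ (s : ℕ)) (hu : W₁ s = true) :
    ∃ k : Fin r, k < s ∧ W₁ k = false ∧ W₂ k = true :=
  exists_v_u_position_general G r d c σ hσ i j W₁ W₂ hadj horder s hu
end
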